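/- arXiv:1709.02838 — 10 statements merged into one kernel-verified Lean document; each statement's English description precedes it below -/
import Mathlib

section
/- Let H be a real Hilbert space and T : H → H a non-expansive map. Let (x^k) and (y^k) be the fixed-point iteration sequences x^{k+1} = T(x^k) and y^{k+1} = T(y^k) from arbitrary starting points x^0, y^0 ∈ H, and assume ‖x^k‖ → ∞. Then ‖y^k‖ → ∞ as well, and the set of weak accumulation points of ((1/‖x^k‖)x^k) equals the set of weak accumulation points of ((1/‖y^k‖)y^k). In particular, this set is independent of the starting point. -/
open Filter
open scoped RealInnerProductSpace

/-- `q` is a weak accumulation point of the sequence `u`: some subsequence of `u`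
converges weakly to `q`. -/
def IsWeakAccPt {H : Type*} [NormedAddCommGroup H] [InnerProductSpace ℝ H]
    (u : ℕ → H) (q : H) : Prop :=
  ∃ φ : ℕ → ℕ, StrictMono φ ∧
    ∀ z : H, Tendsto (fun j => ⟪u (φ j), z⟫) atTop (nhds ⟪q, z⟫)

lemma accPt_of_diff {H : Type*} [NormedAddCommGroup H] [InnerProductSpace ℝ H]
    (u v : ℕ → H) (h : Tendsto (fun k => ‖u k - v k‖) atTop (nhds 0))
    (q : H) (hq : IsWeakAccPt u q) : IsWeakAccPt v q := by
  obtain ⟨φ, hφ, hc⟩ := hq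
  refine ⟨φ, hφ, fun z => ?_⟩
  have hg : Tendsto (fun j => ‖u (φ j) - v (φ j)‖ * ‖z‖) atTop (nhds 0) := by
    have := (h.comp hφ.tendsto_atTop).mul_const ‖z‖
    simpa using this
  have h0 : Tendsto (fun j => ⟪v (φ j) - u (φ j), z⟫) atTop (nhds 0) := by
    apply squeeze_zero_norm (fun j => ?_) hg
    calc ‖⟪v (φ j) - u (φ j), z⟫‖ ≤ ‖v (φ j) - u (φ j)‖ * ‖z‖ := by
          rw [Real.norm_eq_abs]; exact abs_real_inner_le_norm _ _
      _ = ‖u (φ j) - v (φ j)‖ * ‖z‖ := by rw [norm_sub_rev]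
  have := (hc z).add h0
  simp only [inner_sub_left] at this
  simpa using this

/-- For a non-expansive `T` and two fixed-point iteration sequences
`x^{k+1} = T(x^k)`, `y^{k+1} = T(y^k)` with `‖x^k‖ → ∞`, we also have `‖y^k‖ → ∞`,
and the weak accumulation points of the normalized sequences coincide. -/
theorem weakAccPts_independent_of_start
    {H : Type*} [NormedAddCommGroup H] [InnerProductSpace ℝ H] [CompleteSpace H]
    (T : H → H) (hT : ∀ u v : H, ‖T u - T v‖ ≤ ‖u - v‖)
    (x y : ℕ → H)
    (hx : ∀ k, x (k + 1) = T (x k)) (hy : ∀ k, y (k + 1) = T (y k))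
    (hxn : Tendsto (fun k => ‖x k‖) atTop atTop) :
    Tendsto (fun k => ‖y k‖) atTop atTop ∧
    {q : H | IsWeakAccPt (fun k => (1 / ‖x k‖) • x k) q} =
      {q : H | IsWeakAccPt (fun k => (1 / ‖y k‖) • y k) q} := by
  set C := ‖x 0 - y 0‖ with hC
  have h1 : ∀ k, ‖x k - y k‖ ≤ C := by
    intro k
    induction k with
    | zero => exact le_refl _
    | succ n ih =>
      rw [hx, hy]
      exact le_trans (hT _ _) ih
  have hyn : Tendsto (fun k => ‖y k‖) atTop atTop := by
    apply tendsto_atTop_mono (fun k => ?_) (tendsto_atTop_add_const_right _ (-C) hxn)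
    have := norm_sub_norm_le (x k) (y k)
    have := h1 k
    linarith
  refine ⟨hyn, ?_⟩
  have key : ∀ k, 0 < ‖x k‖ → 0 < ‖y k‖ →
      ‖(1 / ‖x k‖) • x k - (1 / ‖y k‖) • y k‖ ≤ 2 * C / ‖x k‖ := by
    intro k ha hb
    set a := ‖x k‖
    set b := ‖y k‖
    have e : (1 / a) • x k - (1 / b) • y k
        = (1 / a) • (x k - y k) + (1 / a - 1 / b) • y k := by module
    rw [e]
    have h2 : |b - a| ≤ C := by
      have := norm_sub_norm_le (y k) (x k)
      have := norm_sub_norm_le (x k) (y k)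
      have := h1 k
      rw [norm_sub_rev (y k)] at *
      rcases abs_cases (b - a) with ⟨h, _⟩ | ⟨h, _⟩ <;> rw [h] <;> linarith
    calc ‖(1 / a) • (x k - y k) + (1 / a - 1 / b) • y k‖
        ≤ ‖(1 / a) • (x k - y k)‖ + ‖(1 / a - 1 / b) • y k‖ := norm_add_le _ _
      _ = (1 / a) * ‖x k - y k‖ + |1 / a - 1 / b| * b := by
          rw [norm_smul, norm_smul, Real.norm_eq_abs, Real.norm_eq_abs,
            abs_of_pos (by positivity : (0:ℝ) < 1 / a)]
      _ = (1 / a) * ‖x k - y k‖ + |b - a| / a := by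
          rw [abs_sub_comm, show 1 / b - 1 / a = (a - b) / (a * b) by rw [div_sub_div _ _ hb.ne' ha.ne', one_mul, mul_one, mul_comm b a],
            abs_div, abs_of_pos (by positivity : (0:ℝ) < a * b)]
          rw [abs_sub_comm a b]
          field_simp
      _ ≤ (1 / a) * C + C / a := by
          gcongr
          exact h1 k
      _ = 2 * C / a := by ring
  have hdiff : Tendsto (fun k => ‖(1 / ‖x k‖) • x k - (1 / ‖y k‖) • y k‖) atTop (nhds 0) := by
    have hlim : Tendsto (fun k => 2 * C / ‖x k‖) atTop (nhds 0) :=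
      Tendsto.div_atTop tendsto_const_nhds hxn
    have hev : ∀ᶠ k in atTop, ‖(1 / ‖x k‖) • x k - (1 / ‖y k‖) • y k‖ ≤ 2 * C / ‖x k‖ := by
      filter_upwards [hxn.eventually_gt_atTop 0, hyn.eventually_gt_atTop 0] with k ha hb
      exact key k ha hb
    exact squeeze_zero' (Eventually.of_forall fun k => norm_nonneg _) hev hlim
  ext q
  simp only [Set.mem_setOf_eq]
  constructor
  · exact accPt_of_diff _ _ hdiff q
  · refine accPt_of_diff _ _ ?_ q
    simpa only [norm_sub_rev] using hdiff
end

section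
/- Let Φ : ℝ → ℝ and Ψ : ℝ → ℝ be continuous strictly decreasing functions, and define f : ℝ² → ℝ by f(x,y) = max{Φ(x), Ψ(y)}. Let (x', y') ∈ ℝ² satisfy Φ(x') = Ψ(y'), and suppose (x, y) is a minimizer over ℝ² of the function (u,v) ↦ f(u,v) + (1/2)(u − x')² + (1/2)(v − y')² (i.e., (x,y) = Prox_f(x',y')). Then Φ(x) = Ψ(y). -/
lemma prox_aux (Φ Ψ : ℝ → ℝ) (hΨc : Continuous Ψ) (hΦ : StrictAnti Φ)
    (x' y' x y : ℝ) (heq : Φ x' = Ψ y')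
    (hmin : ∀ u v : ℝ,
      max (Φ x) (Ψ y) + (1 / 2) * (x - x') ^ 2 + (1 / 2) * (y - y') ^ 2 ≤
        max (Φ u) (Ψ v) + (1 / 2) * (u - x') ^ 2 + (1 / 2) * (v - y') ^ 2)
    (hgt : Ψ y < Φ x) : False := by
  have hy : y = y' := by
    by_contra hyy
    have hopen : IsOpen {v : ℝ | Ψ v < Φ x} := isOpen_lt hΨc continuous_const
    obtain ⟨δ, hδ, hball⟩ := Metric.isOpen_iff.mp hopen y hgt
    rcases lt_or_gt_of_ne hyy with h1 | h1
    · have hm : (0:ℝ) < min (δ/2) ((y'-y)/2) := lt_min (by linarith) (by linarith)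
      set v := y + min (δ/2) ((y'-y)/2) with hv
      clear_value v
      have hmd : min (δ/2) ((y'-y)/2) ≤ δ/2 := min_le_left _ _
      have hmy : min (δ/2) ((y'-y)/2) ≤ (y'-y)/2 := min_le_right _ _
      have hvball : v ∈ Metric.ball y δ := by
        rw [Metric.mem_ball, Real.dist_eq, hv, add_sub_cancel_left, abs_of_pos hm]
        linarith
      have hΨv : Ψ v < Φ x := hball hvball
      have h2 : (v - y')^2 < (y - y')^2 := by
        have hyv : y < v := by rw [hv]; linarith
        have hvy' : v < y' := by rw [hv]; linarith
        nlinarith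
      have h3 := hmin x v
      rw [max_eq_left hgt.le, max_eq_left hΨv.le] at h3
      linarith [h2, h3]
    · have hm : (0:ℝ) < min (δ/2) ((y-y')/2) := lt_min (by linarith) (by linarith)
      set v := y - min (δ/2) ((y-y')/2) with hv
      clear_value v
      have hmd : min (δ/2) ((y-y')/2) ≤ δ/2 := min_le_left _ _
      have hmy : min (δ/2) ((y-y')/2) ≤ (y-y')/2 := min_le_right _ _
      have hvball : v ∈ Metric.ball y δ := by
        rw [Metric.mem_ball, Real.dist_eq, hv]
        rw [show y - min (δ/2) ((y-y')/2) - y = -(min (δ/2) ((y-y')/2)) by ring,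
          abs_neg, abs_of_pos hm]
        linarith
      have hΨv : Ψ v < Φ x := hball hvball
      have h2 : (v - y')^2 < (y - y')^2 := by
        have hyv : v < y := by rw [hv]; linarith
        have hvy' : y' < v := by rw [hv]; linarith
        nlinarith
      have h3 := hmin x v
      rw [max_eq_left hgt.le, max_eq_left hΨv.le] at h3
      linarith [h2, h3]
  have hΨy : Ψ y = Φ x' := by rw [hy, ← heq]
  have hxx : x < x' := hΦ.lt_iff_gt.mp (by rw [← hΨy]; exact hgt)
  set u := (x + x')/2 with hu
  clear_value u
  have h1 : x < u := by rw [hu]; linarith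
  have h2 : u < x' := by rw [hu]; linarith
  have hΦu1 : Φ u < Φ x := hΦ h1
  have hΦu2 : Φ x' < Φ u := hΦ h2
  have hmax : max (Φ u) (Ψ y) = Φ u := max_eq_left (by rw [hΨy]; exact hΦu2.le)
  have h3 := hmin u y
  rw [hmax, max_eq_left hgt.le] at h3
  have h4 : (u - x')^2 < (x - x')^2 := by nlinarith
  linarith

/-- If `Φ, Ψ` are continuous strictly decreasing, `Φ x' = Ψ y'`, and `(x, y)`
minimizes `(u,v) ↦ max (Φ u) (Ψ v) + (1/2)(u - x')² + (1/2)(v - y')²` (i.e. is the proximal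
point of `f(u,v) = max (Φ u) (Ψ v)` at `(x', y')`), then `Φ x = Ψ y`. -/
theorem prox_stays_on_curve
    (Φ Ψ : ℝ → ℝ) (hΦc : Continuous Φ) (hΨc : Continuous Ψ)
    (hΦ : StrictAnti Φ) (hΨ : StrictAnti Ψ)
    (x' y' x y : ℝ) (heq : Φ x' = Ψ y')
    (hmin : ∀ u v : ℝ,
      max (Φ x) (Ψ y) + (1 / 2) * (x - x') ^ 2 + (1 / 2) * (y - y') ^ 2 ≤
        max (Φ u) (Ψ v) + (1 / 2) * (u - x') ^ 2 + (1 / 2) * (v - y') ^ 2) :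
    Φ x = Ψ y := by
  rcases lt_trichotomy (Φ x) (Ψ y) with h | h | h
  · exact absurd h (by
      have := prox_aux Ψ Φ hΦc hΨ y' x' y x heq.symm
        (fun u v => by
          have h5 := hmin v u
          rw [max_comm (Ψ y) (Φ x), max_comm (Ψ u) (Φ v)]
          linarith) h
      exact this.elim)
  · exact h
  · exact (prox_aux Φ Ψ hΨc hΦ x' y' x y heq hmin h).elim
end

section
/- Let Φ : ℝ → ℝ and Ψ : ℝ → ℝ be strictly decreasing functions. Let (x_k) and (y_k) be real sequences satisfying: Φ(x_k) = Ψ(y_k) for all k ≥ 0, and ‖(x_k, y_k) − (x_{k+1}, y_{k+1})‖ ≤ 1 in ℝ² for all k ≥ 0. Let (ξ, ζ) ∈ ℝ² satisfy Φ(ξ) = Ψ(ζ), suppose Φ(x_0) ≥ Φ(ξ), and suppose there exists m with Φ(x_m) < Φ(ξ). Then there exists k ≥ 0 such that ‖(ξ, ζ) − (x_k, y_k)‖ ≤ 1. -/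
/-- The Euclidean norm of a point `(a, b) ∈ ℝ²`. -/
noncomputable def enorm2 (a b : ℝ) : ℝ := Real.sqrt (a ^ 2 + b ^ 2)

/-- Let `Φ, Ψ` be strictly decreasing, let `(x_k, y_k)` stay on the curve
`Φ(x) = Ψ(y)` with consecutive steps of Euclidean length at most `1`, and let `(ξ, ζ)` be
on the curve with `Φ(x_0) ≥ Φ(ξ)` and `Φ(x_m) < Φ(ξ)` for some `m`. Then some iterate is
within Euclidean distance `1` of `(ξ, ζ)`. -/
theorem iterate_approximates_curve_point
    (Φ Ψ : ℝ → ℝ) (hΦ : StrictAnti Φ) (hΨ : StrictAnti Ψ)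
    (x y : ℕ → ℝ)
    (hcurve : ∀ k, Φ (x k) = Ψ (y k))
    (hstep : ∀ k, enorm2 (x k - x (k + 1)) (y k - y (k + 1)) ≤ 1)
    (ξ ζ : ℝ) (hξζ : Φ ξ = Ψ ζ)
    (h0 : Φ (x 0) ≥ Φ ξ)
    (hm : ∃ m, Φ (x m) < Φ ξ) :
    ∃ k, enorm2 (ξ - x k) (ζ - y k) ≤ 1 := by
  classical
  -- take the minimal m with Φ (x m) < Φ ξ
  let m := Nat.find hm
  have hmlt : Φ (x m) < Φ ξ := Nat.find_spec hm
  have hmpos : m ≠ 0 := by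
    intro h
    have := hmlt
    rw [h] at this
    exact absurd h0 (not_le.mpr this)
  obtain ⟨n, hn⟩ := Nat.exists_eq_succ_of_ne_zero hmpos
  rw [hn] at hmlt
  have hprev : ¬ Φ (x n) < Φ ξ := Nat.find_min hm (by omega)
  push_neg at hprev
  -- x n ≤ ξ < x (n+1)
  have hx1 : x n ≤ ξ := by
    by_contra h
    exact absurd (hΦ (not_le.mp h)) (not_lt.mpr hprev)
  have hx2 : ξ ≤ x (n + 1) := by
    by_contra h
    exact absurd hmlt (not_lt.mpr (le_of_lt (hΦ (not_le.mp h))))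
  -- y side
  have hy1' : Ψ ζ ≤ Ψ (y n) := by rw [← hcurve, ← hξζ]; exact hprev
  have hy2' : Ψ (y (n + 1)) < Ψ ζ := by rw [← hcurve, ← hξζ]; exact hmlt
  have hy1 : y n ≤ ζ := by
    by_contra h
    exact absurd (hΨ (not_le.mp h)) (not_lt.mpr hy1')
  have hy2 : ζ ≤ y (n + 1) := by
    by_contra h
    exact absurd (hΨ (not_le.mp h)) (not_lt.mpr (le_of_lt hy2'))
  refine ⟨n, le_trans ?_ (hstep n)⟩
  unfold enorm2
  apply Real.sqrt_le_sqrt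
  have h1 : (ξ - x n) ^ 2 ≤ (x n - x (n + 1)) ^ 2 := by
    nlinarith
  have h2 : (ζ - y n) ^ 2 ≤ (y n - y (n + 1)) ^ 2 := by
    nlinarith
  linarith
end

section
/- Define ξ_0 = 0, ξ_n = Σ_{i=1}^n i^i, and ζ_0 = 0, ζ_n = Σ_{i=1}^n (2/(3 + (−1)^i)) i^i for n ≥ 1. Then ξ_{2m}/ζ_{2m} → 2 and ξ_{2m+1}/ζ_{2m+1} → 1 as m → ∞. Consequently, the normalized sequence ((ξ_n, ζ_n)/‖(ξ_n, ζ_n)‖) in ℝ² converges to (2/√5, 1/√5) along even indices n and to (1/√2, 1/√2) along odd indices n, so the sequence ((ξ_n, ζ_n)) has (at least) two distinct cosmic accumulation points. -/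
open Filter

/-- `ξ_n = Σ_{i=1}^n i^i` (with `ξ_0 = 0`). -/
noncomputable def xiSeq (n : ℕ) : ℝ := ∑ i ∈ Finset.Icc 1 n, (i : ℝ) ^ i

/-- `ζ_n = Σ_{i=1}^n (2/(3 + (−1)^i)) i^i` (with `ζ_0 = 0`). -/
noncomputable def zetaSeq (n : ℕ) : ℝ :=
  ∑ i ∈ Finset.Icc 1 n, (2 / (3 + (-1 : ℝ) ^ i)) * (i : ℝ) ^ i

/-- The Euclidean norm of `(ξ_n, ζ_n)`. -/
noncomputable def xzNorm (n : ℕ) : ℝ := Real.sqrt (xiSeq n ^ 2 + zetaSeq n ^ 2)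

lemma xi_rec (n : ℕ) : xiSeq (n+1) = xiSeq n + ((n:ℝ)+1) ^ (n+1) := by
  unfold xiSeq
  rw [Finset.sum_Icc_succ_top (by omega : 1 ≤ n+1)]
  push_cast; ring

lemma zeta_rec (n : ℕ) :
    zetaSeq (n+1) = zetaSeq n + (2 / (3 + (-1:ℝ)^(n+1))) * ((n:ℝ)+1) ^ (n+1) := by
  unfold zetaSeq
  rw [Finset.sum_Icc_succ_top (by omega : 1 ≤ n+1)]
  push_cast; ring

lemma coeff_pos (i : ℕ) : 0 < 2 / (3 + (-1:ℝ)^i) := by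
  rcases neg_one_pow_eq_or ℝ i with h | h <;> rw [h] <;> norm_num

lemma coeff_le_one (i : ℕ) : 2 / (3 + (-1:ℝ)^i) ≤ 1 := by
  rcases neg_one_pow_eq_or ℝ i with h | h <;> rw [h] <;> norm_num

lemma xi_nonneg (n : ℕ) : 0 ≤ xiSeq n :=
  Finset.sum_nonneg fun i _ => by positivity

lemma zeta_nonneg (n : ℕ) : 0 ≤ zetaSeq n :=
  Finset.sum_nonneg fun i _ => mul_nonneg (coeff_pos i).le (by positivity)

lemma zeta_le_xi (n : ℕ) : zetaSeq n ≤ xiSeq n := by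
  refine Finset.sum_le_sum fun i _ => ?_
  calc (2 / (3 + (-1:ℝ)^i)) * (i:ℝ)^i ≤ 1 * (i:ℝ)^i := by
        exact mul_le_mul_of_nonneg_right (coeff_le_one i) (by positivity)
    _ = (i:ℝ)^i := one_mul _

lemma xi_le (n : ℕ) : xiSeq n ≤ 2 * (n:ℝ)^n := by
  induction n with
  | zero => simp [xiSeq]
  | succ k ih =>
    rw [xi_rec]
    have hk : (k:ℝ)^k ≤ ((k:ℝ)+1)^k := by
      exact pow_le_pow_left₀ (by positivity) (by linarith) k
    rcases Nat.eq_zero_or_pos k with hk0 | hk0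
    · subst hk0; norm_num [xiSeq]
    have h2 : (2:ℝ) * (k:ℝ)^k ≤ ((k:ℝ)+1)^(k+1) := by
      have h1 : (2:ℝ) ≤ (k:ℝ)+1 := by
        have : (1:ℝ) ≤ (k:ℝ) := by exact_mod_cast hk0
        linarith
      calc (2:ℝ) * (k:ℝ)^k ≤ ((k:ℝ)+1) * ((k:ℝ)+1)^k :=
              mul_le_mul h1 hk (by positivity) (by positivity)
          _ = ((k:ℝ)+1)^(k+1) := by ring
    push_cast
    linarith

lemma xi_div_bounds (k : ℕ) :
    1 ≤ xiSeq (k+1) / ((k:ℝ)+1)^(k+1) ∧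
      xiSeq (k+1) / ((k:ℝ)+1)^(k+1) ≤ 1 + 2/((k:ℝ)+1) := by
  have hN : (0:ℝ) < ((k:ℝ)+1)^(k+1) := by positivity
  have hrec := xi_rec k
  have hup : xiSeq k ≤ (2/((k:ℝ)+1)) * ((k:ℝ)+1)^(k+1) := by
    have h1 : xiSeq k ≤ 2*(k:ℝ)^k := xi_le k
    have h2 : (k:ℝ)^k ≤ ((k:ℝ)+1)^k := pow_le_pow_left₀ (by positivity) (by linarith) k
    have h3 : (2/((k:ℝ)+1)) * ((k:ℝ)+1)^(k+1) = 2*((k:ℝ)+1)^k := by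
      field_simp; ring
    rw [h3]; linarith
  constructor
  · rw [le_div_iff₀ hN, one_mul]
    linarith [xi_nonneg k]
  · rw [div_le_iff₀ hN]
    have h4 : (1 + 2/((k:ℝ)+1)) * ((k:ℝ)+1)^(k+1)
        = ((k:ℝ)+1)^(k+1) + (2/((k:ℝ)+1)) * ((k:ℝ)+1)^(k+1) := by ring
    rw [h4]; linarith

lemma zeta_div_bounds (k : ℕ) :
    2/(3+(-1:ℝ)^(k+1)) ≤ zetaSeq (k+1) / ((k:ℝ)+1)^(k+1) ∧
      zetaSeq (k+1) / ((k:ℝ)+1)^(k+1) ≤ 2/(3+(-1:ℝ)^(k+1)) + 2/((k:ℝ)+1) := by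
  have hN : (0:ℝ) < ((k:ℝ)+1)^(k+1) := by positivity
  have hrec := zeta_rec k
  have hup : zetaSeq k ≤ (2/((k:ℝ)+1)) * ((k:ℝ)+1)^(k+1) := by
    have h1 : zetaSeq k ≤ 2*(k:ℝ)^k := le_trans (zeta_le_xi k) (xi_le k)
    have h2 : (k:ℝ)^k ≤ ((k:ℝ)+1)^k := pow_le_pow_left₀ (by positivity) (by linarith) k
    have h3 : (2/((k:ℝ)+1)) * ((k:ℝ)+1)^(k+1) = 2*((k:ℝ)+1)^k := by
      field_simp; ring
    rw [h3]; linarith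
  constructor
  · rw [le_div_iff₀ hN]
    linarith [zeta_nonneg k]
  · rw [div_le_iff₀ hN]
    have h4 : (2/(3+(-1:ℝ)^(k+1)) + 2/((k:ℝ)+1)) * ((k:ℝ)+1)^(k+1)
        = (2/(3+(-1:ℝ)^(k+1))) * ((k:ℝ)+1)^(k+1)
          + (2/((k:ℝ)+1)) * ((k:ℝ)+1)^(k+1) := by ring
    rw [h4]; linarith

lemma lim_ub (c : ℝ) : Tendsto (fun n : ℕ => c + 2/(n:ℝ)) atTop (nhds c) := by
  simpa using tendsto_const_nhds.add (tendsto_const_div_atTop_nhds_zero_nat (2:ℝ))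

lemma lim_xi : Tendsto (fun n : ℕ => xiSeq n / (n:ℝ)^n) atTop (nhds 1) := by
  refine tendsto_of_tendsto_of_tendsto_of_le_of_le' tendsto_const_nhds (lim_ub 1) ?_ ?_
  · filter_upwards [eventually_ge_atTop 1] with n hn
    obtain ⟨k, rfl⟩ : ∃ k, n = k+1 := ⟨n-1, by omega⟩
    have := (xi_div_bounds k).1
    push_cast
    exact this
  · filter_upwards [eventually_ge_atTop 1] with n hn
    obtain ⟨k, rfl⟩ : ∃ k, n = k+1 := ⟨n-1, by omega⟩
    have := (xi_div_bounds k).2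
    push_cast
    exact this

lemma lim_zeta_even :
    Tendsto (fun m : ℕ => zetaSeq (2*m) / ((2*m : ℕ):ℝ)^(2*m)) atTop (nhds (1/2)) := by
  refine tendsto_of_tendsto_of_tendsto_of_le_of_le' tendsto_const_nhds (lim_ub (1/2)) ?_ ?_
  · filter_upwards [eventually_ge_atTop 1] with m hm
    obtain ⟨k, hk⟩ : ∃ k, 2*m = k+1 := ⟨2*m-1, by omega⟩
    have hc : (-1:ℝ)^(k+1) = 1 := by rw [← hk, pow_mul]; norm_num
    have h := (zeta_div_bounds k).1
    rw [hc] at h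
    norm_num at h
    rw [hk]
    push_cast
    exact h
  · filter_upwards [eventually_ge_atTop 1] with m hm
    obtain ⟨k, hk⟩ : ∃ k, 2*m = k+1 := ⟨2*m-1, by omega⟩
    have hc : (-1:ℝ)^(k+1) = 1 := by rw [← hk, pow_mul]; norm_num
    have h := (zeta_div_bounds k).2
    rw [hc] at h
    norm_num at h
    have hkm : (m:ℝ) ≤ (k:ℝ)+1 := by
      have : (2*m : ℝ) = (k:ℝ)+1 := by exact_mod_cast congrArg (Nat.cast : ℕ → ℝ) hk
      have hm' : (1:ℝ) ≤ m := by exact_mod_cast hm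
      linarith
    have hmpos : (0:ℝ) < m := by exact_mod_cast hm
    calc zetaSeq (2*m) / ((2*m : ℕ):ℝ)^(2*m)
        ≤ 1/2 + 2/((k:ℝ)+1) := by rw [hk]; push_cast; exact h
      _ ≤ 1/2 + 2/(m:ℝ) := by gcongr
  ----
lemma lim_zeta_odd :
    Tendsto (fun m : ℕ => zetaSeq (2*m+1) / ((2*m+1 : ℕ):ℝ)^(2*m+1)) atTop (nhds 1) := by
  refine tendsto_of_tendsto_of_tendsto_of_le_of_le' tendsto_const_nhds (lim_ub 1) ?_ ?_
  · filter_upwards [eventually_ge_atTop 1] with m hm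
    have hc : (-1:ℝ)^(2*m+1) = -1 := by rw [pow_succ, pow_mul]; norm_num
    have h := (zeta_div_bounds (2*m)).1
    rw [hc] at h
    norm_num at h
    push_cast
    exact h
  · filter_upwards [eventually_ge_atTop 1] with m hm
    have hc : (-1:ℝ)^(2*m+1) = -1 := by rw [pow_succ, pow_mul]; norm_num
    have h := (zeta_div_bounds (2*m)).2
    rw [hc] at h
    norm_num at h
    have hmpos : (0:ℝ) < m := by exact_mod_cast hm
    have hkm : (m:ℝ) ≤ 2*(m:ℝ)+1 := by linarith
    calc zetaSeq (2*m+1) / ((2*m+1 : ℕ):ℝ)^(2*m+1)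
        ≤ 1 + 2/(2*(m:ℝ)+1) := by push_cast; exact h
      _ ≤ 1 + 2/(m:ℝ) := by gcongr


lemma xi_pos (k : ℕ) : 0 < xiSeq (k+1) := by
  rw [xi_rec]
  have := xi_nonneg k
  positivity

lemma zeta_pos (k : ℕ) : 0 < zetaSeq (k+1) := by
  rw [zeta_rec]
  have h1 := zeta_nonneg k
  have h2 : (0:ℝ) < (2 / (3 + (-1:ℝ)^(k+1))) * ((k:ℝ)+1)^(k+1) :=
    mul_pos (coeff_pos (k+1)) (by positivity)
  linarith

lemma xz_pos (k : ℕ) : 0 < xzNorm (k+1) :=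
  Real.sqrt_pos.mpr (add_pos_of_pos_of_nonneg (pow_pos (xi_pos k) 2) (sq_nonneg _))

/-- `ξ_{2m}/ζ_{2m} → 2` and `ξ_{2m+1}/ζ_{2m+1} → 1`; consequently the
normalized sequence `(ξ_n, ζ_n)/‖(ξ_n, ζ_n)‖` converges to `(2/√5, 1/√5)` along even
indices and to `(1/√2, 1/√2)` along odd indices, giving two distinct cosmic accumulation
points. -/
theorem two_cosmic_accumulation_points :
    Tendsto (fun m : ℕ => xiSeq (2 * m) / zetaSeq (2 * m)) atTop (nhds 2) ∧
    Tendsto (fun m : ℕ => xiSeq (2 * m + 1) / zetaSeq (2 * m + 1)) atTop (nhds 1) ∧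
    Tendsto (fun m : ℕ => (xiSeq (2 * m) / xzNorm (2 * m),
        zetaSeq (2 * m) / xzNorm (2 * m)))
      atTop (nhds (2 / Real.sqrt 5, 1 / Real.sqrt 5)) ∧
    Tendsto (fun m : ℕ => (xiSeq (2 * m + 1) / xzNorm (2 * m + 1),
        zetaSeq (2 * m + 1) / xzNorm (2 * m + 1)))
      atTop (nhds (1 / Real.sqrt 2, 1 / Real.sqrt 2)) ∧
    ((2 / Real.sqrt 5, 1 / Real.sqrt 5) : ℝ × ℝ) ≠ (1 / Real.sqrt 2, 1 / Real.sqrt 2) := by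
  have h2m : Tendsto (fun m : ℕ => 2*m) atTop atTop :=
    StrictMono.tendsto_atTop (fun a b h => by omega)
  have h2m1 : Tendsto (fun m : ℕ => 2*m+1) atTop atTop :=
    StrictMono.tendsto_atTop (fun a b h => by omega)
  have limxiE : Tendsto (fun m : ℕ => xiSeq (2*m) / ((2*m : ℕ):ℝ)^(2*m)) atTop (nhds 1) :=
    lim_xi.comp h2m
  have limxiO : Tendsto (fun m : ℕ => xiSeq (2*m+1) / ((2*m+1 : ℕ):ℝ)^(2*m+1))
      atTop (nhds 1) := lim_xi.comp h2m1
  -- part 1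
  have p1 : Tendsto (fun m : ℕ => xiSeq (2 * m) / zetaSeq (2 * m)) atTop (nhds 2) := by
    have key := limxiE.div lim_zeta_even (by norm_num : (1/2:ℝ) ≠ 0)
    rw [show (1:ℝ)/(1/2) = 2 by norm_num] at key
    refine Filter.Tendsto.congr' ?_ key
    filter_upwards [eventually_ge_atTop 1] with m hm
    simp only [Pi.div_apply]
    obtain ⟨k, hk⟩ : ∃ k, 2*m = k+1 := ⟨2*m-1, by omega⟩
    rw [hk]
    have hb : zetaSeq (k+1) ≠ 0 := (zeta_pos k).ne'
    have hc : ((k+1 : ℕ):ℝ)^(k+1) ≠ 0 := by positivity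
    field_simp
  -- part 2
  have p2 : Tendsto (fun m : ℕ => xiSeq (2 * m + 1) / zetaSeq (2 * m + 1)) atTop (nhds 1) := by
    have key := limxiO.div lim_zeta_odd (by norm_num : (1:ℝ) ≠ 0)
    rw [show (1:ℝ)/1 = 1 by norm_num] at key
    refine Filter.Tendsto.congr' ?_ key
    filter_upwards with m
    simp only [Pi.div_apply]
    have hb : zetaSeq (2*m+1) ≠ 0 := (zeta_pos (2*m)).ne'
    have hc : ((2*m+1 : ℕ):ℝ)^(2*m+1) ≠ 0 := by positivity
    field_simp
  -- norm limits
  have normEq : ∀ k : ℕ, xzNorm (k+1) / ((k+1 : ℕ):ℝ)^(k+1) =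
      Real.sqrt ((xiSeq (k+1) / ((k+1 : ℕ):ℝ)^(k+1))^2
        + (zetaSeq (k+1) / ((k+1 : ℕ):ℝ)^(k+1))^2) := by
    intro k
    have hc : (0:ℝ) < ((k+1 : ℕ):ℝ)^(k+1) := by positivity
    rw [div_pow, div_pow, ← add_div, Real.sqrt_div (by positivity),
      Real.sqrt_sq hc.le, xzNorm]
  have limNormE : Tendsto (fun m : ℕ => xzNorm (2*m) / ((2*m : ℕ):ℝ)^(2*m)) atTop
      (nhds (Real.sqrt 5 / 2)) := by
    have h := ((limxiE.pow 2).add (lim_zeta_even.pow 2)).sqrt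
    rw [show Real.sqrt ((1:ℝ)^2 + (1/2)^2) = Real.sqrt 5 / 2 by
      rw [show ((1:ℝ)^2 + (1/2)^2) = 5/2^2 by norm_num,
        Real.sqrt_div (by norm_num : (0:ℝ) ≤ 5), Real.sqrt_sq (by norm_num : (0:ℝ) ≤ 2)]] at h
    refine Filter.Tendsto.congr' ?_ h
    filter_upwards [eventually_ge_atTop 1] with m hm
    obtain ⟨k, hk⟩ : ∃ k, 2*m = k+1 := ⟨2*m-1, by omega⟩
    rw [hk, normEq k]
  have limNormO : Tendsto (fun m : ℕ => xzNorm (2*m+1) / ((2*m+1 : ℕ):ℝ)^(2*m+1)) atTop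
      (nhds (Real.sqrt 2)) := by
    have h := ((limxiO.pow 2).add (lim_zeta_odd.pow 2)).sqrt
    rw [show Real.sqrt ((1:ℝ)^2 + 1^2) = Real.sqrt 2 by norm_num] at h
    refine Filter.Tendsto.congr' ?_ h
    filter_upwards with m
    exact (normEq (2*m)).symm ▸ rfl
  have hs5 : Real.sqrt 5 / 2 ≠ 0 := by positivity
  have hs2 : Real.sqrt 2 ≠ 0 := by positivity
  -- part 3
  have p3a : Tendsto (fun m : ℕ => xiSeq (2*m) / xzNorm (2*m)) atTop
      (nhds (2 / Real.sqrt 5)) := by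
    have key := limxiE.div limNormE hs5
    rw [one_div_div] at key
    refine Filter.Tendsto.congr' ?_ key
    filter_upwards [eventually_ge_atTop 1] with m hm
    simp only [Pi.div_apply]
    obtain ⟨k, hk⟩ : ∃ k, 2*m = k+1 := ⟨2*m-1, by omega⟩
    rw [hk]
    have hb : xzNorm (k+1) ≠ 0 := (xz_pos k).ne'
    have hc : ((k+1 : ℕ):ℝ)^(k+1) ≠ 0 := by positivity
    field_simp
  have p3b : Tendsto (fun m : ℕ => zetaSeq (2*m) / xzNorm (2*m)) atTop
      (nhds (1 / Real.sqrt 5)) := by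
    have key := lim_zeta_even.div limNormE hs5
    rw [show ((1:ℝ)/2) / (Real.sqrt 5 / 2) = 1 / Real.sqrt 5 by
      have : Real.sqrt 5 ≠ 0 := by positivity
      field_simp] at key
    refine Filter.Tendsto.congr' ?_ key
    filter_upwards [eventually_ge_atTop 1] with m hm
    simp only [Pi.div_apply]
    obtain ⟨k, hk⟩ : ∃ k, 2*m = k+1 := ⟨2*m-1, by omega⟩
    rw [hk]
    have hb : xzNorm (k+1) ≠ 0 := (xz_pos k).ne'
    have hc : ((k+1 : ℕ):ℝ)^(k+1) ≠ 0 := by positivity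
    field_simp
  -- part 4
  have p4a : Tendsto (fun m : ℕ => xiSeq (2*m+1) / xzNorm (2*m+1)) atTop
      (nhds (1 / Real.sqrt 2)) := by
    have key := limxiO.div limNormO hs2
    refine Filter.Tendsto.congr' ?_ key
    filter_upwards with m
    simp only [Pi.div_apply]
    have hb : xzNorm (2*m+1) ≠ 0 := (xz_pos (2*m)).ne'
    have hc : ((2*m+1 : ℕ):ℝ)^(2*m+1) ≠ 0 := by positivity
    field_simp
  have p4b : Tendsto (fun m : ℕ => zetaSeq (2*m+1) / xzNorm (2*m+1)) atTop
      (nhds (1 / Real.sqrt 2)) := by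
    have key := lim_zeta_odd.div limNormO hs2
    refine Filter.Tendsto.congr' ?_ key
    filter_upwards with m
    simp only [Pi.div_apply]
    have hb : xzNorm (2*m+1) ≠ 0 := (xz_pos (2*m)).ne'
    have hc : ((2*m+1 : ℕ):ℝ)^(2*m+1) ≠ 0 := by positivity
    field_simp
  -- part 5
  have p5 : ((2 / Real.sqrt 5, 1 / Real.sqrt 5) : ℝ × ℝ) ≠ (1 / Real.sqrt 2, 1 / Real.sqrt 2) := by
    intro h
    have h1 : (2:ℝ) / Real.sqrt 5 = 1 / Real.sqrt 2 := congrArg Prod.fst h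
    have h2 : ((2:ℝ)/Real.sqrt 5)^2 = (1/Real.sqrt 2)^2 := by rw [h1]
    rw [div_pow, div_pow, Real.sq_sqrt (by norm_num : (0:ℝ) ≤ 5),
      Real.sq_sqrt (by norm_num : (0:ℝ) ≤ 2)] at h2
    norm_num at h2
  exact ⟨p1, p2, p3a.prodMk_nhds p3b, p4a.prodMk_nhds p4b, p5⟩
end

section
/- Let α ∈ (0, 1] and define the real sequence (x_k) by x_0 = 0 and x_{k+1} = x_k + α·e^{−x_k}. Then for all k ≥ 0: log(k+1) + log α ≤ x_k ≤ log(k+1) + log 2. -/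
/-- for the iteration `x_0 = 0`, `x_{k+1} = x_k + α e^{−x_k}` with
`α ∈ (0, 1]`, we have `log(k+1) + log α ≤ x_k ≤ log(k+1) + log 2` for all `k`. -/
theorem gradient_iterate_log_bounds
    (α : ℝ) (hα0 : 0 < α) (hα1 : α ≤ 1)
    (x : ℕ → ℝ) (h0 : x 0 = 0)
    (hrec : ∀ k, x (k + 1) = x k + α * Real.exp (-(x k))) :
    ∀ k : ℕ, Real.log (k + 1) + Real.log α ≤ x k ∧
      x k ≤ Real.log (k + 1) + Real.log 2 := by
  have hxpos : ∀ k, 0 ≤ x k := by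
    intro k
    induction k with
    | zero => simp [h0]
    | succ k ih =>
      rw [hrec]
      have : 0 < α * Real.exp (-(x k)) := by positivity
      linarith
  have hlow : ∀ k : ℕ, α * (k + 1) ≤ Real.exp (x k) := by
    intro k
    induction k with
    | zero => simpa [h0] using hα1
    | succ k ih =>
      rw [hrec, Real.exp_add]
      have h1 : 1 + α * Real.exp (-(x k)) ≤ Real.exp (α * Real.exp (-(x k))) := by
        have := Real.add_one_le_exp (α * Real.exp (-(x k)))
        linarith
      have hek : 0 < Real.exp (x k) := Real.exp_pos _
      have h2 : Real.exp (x k) * (1 + α * Real.exp (-(x k))) ≤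
          Real.exp (x k) * Real.exp (α * Real.exp (-(x k))) :=
        mul_le_mul_of_nonneg_left h1 hek.le
      have hee : Real.exp (x k) * Real.exp (-(x k)) = 1 := by
        rw [← Real.exp_add]; simp
      have hid : Real.exp (x k) * (1 + α * Real.exp (-(x k))) = Real.exp (x k) + α := by
        rw [mul_add, mul_one]
        linear_combination α * hee
      rw [hid] at h2
      push_cast
      push_cast at ih
      linarith
  have hup : ∀ k : ℕ, x k ≤ Real.log (2 * (k + 1)) := by
    intro k
    induction k with
    | zero =>
      rw [h0]
      have : (1:ℝ) ≤ 2 * ((0:ℕ) + 1) := by norm_num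
      simpa using Real.log_nonneg this
    | succ k ih =>
      set a : ℝ := (k : ℝ) + 1 with ha
      have ha0 : 0 < a := by positivity
      have hb0 : 0 < a + 1 := by positivity
      set L : ℝ := Real.log (2 * a) with hL
      -- x (k+1) ≤ x k + exp(-(x k))
      have hstep : x (k + 1) ≤ x k + Real.exp (-(x k)) := by
        rw [hrec]
        have := (Real.exp_pos (-(x k))).le
        nlinarith
      -- monotonicity: x k + exp(-(x k)) ≤ L + exp(-L)
      have hxk : x k ≤ L := ih
      have hexk : Real.exp (-(x k)) ≤ 1 := Real.exp_le_one_iff.mpr (by linarith [hxpos k])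
      have hmono : x k + Real.exp (-(x k)) ≤ L + Real.exp (-L) := by
        have h1 : 1 + (x k - L) ≤ Real.exp (x k - L) := by linarith [Real.add_one_le_exp (x k - L)]
        have h2 : Real.exp (-L) = Real.exp (-(x k)) * Real.exp (x k - L) := by
          rw [← Real.exp_add]; ring_nf
        have h3 : Real.exp (x k - L) ≤ 1 := Real.exp_le_one_iff.mpr (by linarith)
        have h4 : 0 < Real.exp (-(x k)) := Real.exp_pos _
        nlinarith
      -- exp(-L) = 1/(2a)
      have hexpL : Real.exp (-L) = 1 / (2 * a) := by
        rw [Real.exp_neg, Real.exp_log (by positivity)]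
        ring
      -- log inequality: L + 1/(2a) ≤ log (2*(a+1))
      have hloglb : L + 1 / (2 * a) ≤ Real.log (2 * (a + 1)) := by
        have hr : Real.log ((2 * a) / (2 * (a + 1))) ≤ (2 * a) / (2 * (a + 1)) - 1 :=
          Real.log_le_sub_one_of_pos (by positivity)
        have hdiv : Real.log ((2 * a) / (2 * (a + 1))) = L - Real.log (2 * (a + 1)) := by
          rw [Real.log_div (by positivity) (by positivity)]
        rw [hdiv] at hr
        have hq : (2 * a) / (2 * (a + 1)) - 1 = -(1 / (a + 1)) := by
          field_simp; ring
        rw [hq] at hr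
        have h5 : 1 / (2 * a) ≤ 1 / (a + 1) := by
          apply one_div_le_one_div_of_le hb0
          linarith
        linarith
      have hgoal : x (k + 1) ≤ Real.log (2 * (a + 1)) := by
        rw [hexpL] at hmono
        linarith
      have : ((k : ℝ) + 1) + 1 = ((k + 1 : ℕ) : ℝ) + 1 := by push_cast; ring
      rw [show (2 : ℝ) * (((k + 1 : ℕ) : ℝ) + 1) = 2 * (a + 1) by push_cast [ha]; ring]
      exact hgoal
  intro k
  have hk1 : (0:ℝ) < (k : ℝ) + 1 := by positivity
  constructor
  · have h1 : Real.log (((k:ℝ) + 1) * α) ≤ x k := by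
      rw [Real.log_le_iff_le_exp (by positivity)]
      calc ((k:ℝ) + 1) * α = α * ((k:ℝ) + 1) := by ring
        _ ≤ Real.exp (x k) := hlow k
    rw [Real.log_mul (ne_of_gt hk1) (ne_of_gt hα0)] at h1
    exact h1
  · have h1 := hup k
    rw [Real.log_mul (by norm_num) (ne_of_gt hk1)] at h1
    linarith
end

section
/- Let ℓ² be the real Hilbert space of square-summable real sequences. There exists a non-expansive map T : ℓ² → ℓ² with no fixed point such that the fixed-point iteration x^{k+1} = T(x^k) started at x^0 = 0 satisfies ‖x^k‖ → ∞, the normalized sequence ((1/‖x^k‖)x^k) converges weakly to 0, but ((1/‖x^k‖)x^k) does not converge strongly (to 0 or to anything else). In particular, weak but not strong cosmic convergence is possible in infinite dimensions. -/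
open Filter
open scoped RealInnerProductSpace

open scoped ENNReal

noncomputable section

def shiftFun (x : ℕ → ℝ) : ℕ → ℝ
  | 0 => 0
  | n+1 => x n

lemma memℓp_shift (x : lp (fun _ : ℕ => ℝ) 2) : Memℓp (shiftFun x) 2 := by
  apply memℓp_gen
  have hx : Summable fun n => ‖(x : ℕ → ℝ) n‖ ^ (2 : ℝ≥0∞).toReal :=
    (lp.memℓp x).summable (by norm_num)
  rw [← summable_nat_add_iff 1]
  simpa [shiftFun] using hx

def Tmap (x : lp (fun _ : ℕ => ℝ) 2) : lp (fun _ : ℕ => ℝ) 2 :=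
  lp.single 2 0 1 + ⟨shiftFun x, memℓp_shift x⟩

lemma Tmap_apply_zero (x : lp (fun _ : ℕ => ℝ) 2) : (Tmap x : ℕ → ℝ) 0 = 1 := by
  show ((lp.single 2 0 (1:ℝ) : lp (fun _ : ℕ => ℝ) 2) : ℕ → ℝ) 0 + shiftFun x 0 = 1
  simp [Tmap, lp.single_apply, shiftFun, Pi.add_apply]

lemma Tmap_apply_succ (x : lp (fun _ : ℕ => ℝ) 2) (n : ℕ) :
    (Tmap x : ℕ → ℝ) (n+1) = (x : ℕ → ℝ) n := by
  show ((lp.single 2 0 (1:ℝ) : lp (fun _ : ℕ => ℝ) 2) : ℕ → ℝ) (n+1) + shiftFun x (n+1) = x n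
  simp [Tmap, lp.single_apply, shiftFun, Pi.add_apply]

-- difference is shift of difference
lemma Tmap_sub (u v : lp (fun _ : ℕ => ℝ) 2) :
    Tmap u - Tmap v = ⟨shiftFun (u - v), memℓp_shift (u - v)⟩ := by
  ext n
  cases n with
  | zero => simp [Tmap_apply_zero, lp.coeFn_sub, shiftFun]
  | succ n => simp [Tmap_apply_succ, lp.coeFn_sub, shiftFun]

lemma norm_shift (w : lp (fun _ : ℕ => ℝ) 2) :
    ‖(⟨shiftFun w, memℓp_shift w⟩ : lp (fun _ : ℕ => ℝ) 2)‖ = ‖w‖ := by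
  have h2 : (0:ℝ) < (2 : ℝ≥0∞).toReal := by norm_num
  have h1 := lp.norm_rpow_eq_tsum h2 (⟨shiftFun w, memℓp_shift w⟩ : lp (fun _ : ℕ => ℝ) 2)
  have h2' := lp.norm_rpow_eq_tsum h2 w
  have hts : (∑' n, ‖shiftFun w n‖ ^ (2:ℝ≥0∞).toReal) = ∑' n, ‖(w : ℕ → ℝ) n‖ ^ (2:ℝ≥0∞).toReal := by
    rw [Summable.tsum_eq_zero_add]
    · simp [shiftFun]
    · rw [← summable_nat_add_iff 1]
      simpa [shiftFun] using (lp.memℓp w).summable (by norm_num)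
  have : ‖(⟨shiftFun w, memℓp_shift w⟩ : lp (fun _ : ℕ => ℝ) 2)‖ ^ (2:ℝ≥0∞).toReal
      = ‖w‖ ^ (2:ℝ≥0∞).toReal := by
    rw [h1, h2']; exact hts
  rw [show (2:ℝ≥0∞).toReal = 2 by norm_num, Real.rpow_two, Real.rpow_two] at this
  nlinarith [norm_nonneg (⟨shiftFun w, memℓp_shift w⟩ : lp (fun _ : ℕ => ℝ) 2), norm_nonneg w,
    sq_nonneg (‖(⟨shiftFun w, memℓp_shift w⟩ : lp (fun _ : ℕ => ℝ) 2)‖ - ‖w‖)]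


def xk (k : ℕ) : lp (fun _ : ℕ => ℝ) 2 := ∑ i ∈ Finset.range k, lp.single 2 i (1:ℝ)

lemma xk_apply (k n : ℕ) : (xk k : ℕ → ℝ) n = if n < k then 1 else 0 := by
  simp only [xk, lp.coeFn_sum, Finset.sum_apply, lp.single_apply, Finset.sum_dite_eq,
    Finset.mem_range, Pi.single_apply, Finset.sum_ite_eq, Finset.sum_ite_eq']

lemma iterate_Tmap (k : ℕ) : Tmap^[k] 0 = xk k := by
  induction k with
  | zero => simp [xk]
  | succ k ih =>
    rw [Function.iterate_succ_apply', ih]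
    ext n
    cases n with
    | zero => simp [Tmap_apply_zero, xk_apply]
    | succ n =>
      rw [Tmap_apply_succ, xk_apply, xk_apply]
      simp [Nat.succ_lt_succ_iff]

lemma norm_xk (k : ℕ) : ‖xk k‖ = Real.sqrt k := by
  have h2 : (0:ℝ) < (2 : ℝ≥0∞).toReal := by norm_num
  have h := lp.norm_sum_single (E := fun _ : ℕ => ℝ) h2 (fun _ => (1:ℝ)) (Finset.range k)
  rw [show (2:ℝ≥0∞).toReal = 2 by norm_num, Real.rpow_two] at h
  simp only [norm_one, one_pow, Finset.sum_const, Finset.card_range, nsmul_eq_mul, mul_one] at h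
  have hn : ‖xk k‖ ^ 2 = (k:ℝ) := by simpa [xk] using h
  rw [← hn, Real.sqrt_sq (norm_nonneg _)]

lemma inner_xk_single_sum (k N : ℕ) (z : lp (fun _ : ℕ => ℝ) 2) :
    ⟪xk k, ∑ i ∈ Finset.range N, lp.single 2 i ((z : ℕ → ℝ) i)⟫
      = ∑ i ∈ Finset.range N, (xk k : ℕ → ℝ) i * (z : ℕ → ℝ) i := by
  rw [inner_sum]
  refine Finset.sum_congr rfl fun i _ => ?_
  rw [lp.inner_single_right]
  simp [RCLike.inner_apply, mul_comm]

lemma abs_inner_xk_single_sum (k N : ℕ) (z : lp (fun _ : ℕ => ℝ) 2) :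
    |⟪xk k, ∑ i ∈ Finset.range N, lp.single 2 i ((z : ℕ → ℝ) i)⟫|
      ≤ ∑ i ∈ Finset.range N, |(z : ℕ → ℝ) i| := by
  rw [inner_xk_single_sum]
  refine (Finset.abs_sum_le_sum_abs _ _).trans (Finset.sum_le_sum fun i _ => ?_)
  rw [abs_mul, xk_apply]
  rcases lt_or_ge i k with h | h
  · simp [h]
  · simp [not_lt.2 h]
  
lemma norm_q_le (k : ℕ) : ‖(1 / ‖xk k‖) • xk k‖ ≤ 1 := by
  rw [norm_smul]
  rcases eq_or_ne (‖xk k‖) 0 with h | h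
  · simp [h]
  · rw [norm_div, norm_one, norm_norm, div_mul_cancel₀ _ h]

lemma one_div_sqrt_tendsto : Tendsto (fun k : ℕ => 1 / Real.sqrt k) atTop (nhds 0) := by
  have hs : Tendsto (fun k : ℕ => Real.sqrt k) atTop atTop := by
    have : Tendsto (fun x : ℝ => x ^ (1/2 : ℝ)) atTop atTop := tendsto_rpow_atTop (by norm_num)
    have h := this.comp tendsto_natCast_atTop_atTop (α := ℕ)
    refine h.congr fun k => ?_
    simp [Real.rpow_natCast, Real.sqrt_eq_rpow]
  simpa [one_div, Pi.inv_def] using hs.inv_tendsto_atTop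

lemma weak_conv (z : lp (fun _ : ℕ => ℝ) 2) :
    Tendsto (fun k : ℕ => ⟪(1 / ‖xk k‖) • xk k, z⟫) atTop (nhds 0) := by
  rw [Metric.tendsto_atTop]
  intro ε hε
  -- choose N with ‖z - s N‖ < ε/2
  have hsum : Tendsto (fun N => ∑ i ∈ Finset.range N, lp.single 2 i ((z : ℕ → ℝ) i))
      atTop (nhds z) := (lp.hasSum_single (by norm_num) z).tendsto_sum_nat
  have hnorm : Tendsto (fun N => ‖z - ∑ i ∈ Finset.range N, lp.single 2 i ((z : ℕ → ℝ) i)‖)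
      atTop (nhds 0) := by
    have := (tendsto_const_nhds (x := z) (f := atTop)).sub hsum
    simpa using this.norm
  obtain ⟨N, hN⟩ := (hnorm.eventually (gt_mem_nhds (half_pos hε))).exists
  set s : lp (fun _ : ℕ => ℝ) 2 := ∑ i ∈ Finset.range N, lp.single 2 i ((z : ℕ → ℝ) i) with hs
  set C : ℝ := ∑ i ∈ Finset.range N, |(z : ℕ → ℝ) i| with hC
  -- choose K with (1/√k) * C < ε/2 for k ≥ K
  have hK : Tendsto (fun k : ℕ => (1 / Real.sqrt k) * C) atTop (nhds 0) := by
    simpa using one_div_sqrt_tendsto.mul_const C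
  obtain ⟨K, hKc⟩ := (hK.eventually (gt_mem_nhds (half_pos hε))).exists_forall_of_atTop
  refine ⟨K, fun k hk => ?_⟩
  have h₁ : |⟪(1 / ‖xk k‖) • xk k, z - s⟫| ≤ ‖z - s‖ := by
    refine (abs_real_inner_le_norm _ _).trans ?_
    exact mul_le_of_le_one_left (norm_nonneg _) (norm_q_le k)
  have h₂ : |⟪(1 / ‖xk k‖) • xk k, s⟫| ≤ (1 / Real.sqrt k) * C := by
    rw [real_inner_smul_left, abs_mul, abs_of_nonneg (by positivity : (0:ℝ) ≤ 1 / ‖xk k‖),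
      norm_xk]
    exact mul_le_mul_of_nonneg_left (abs_inner_xk_single_sum k N z) (by positivity)
  have key : ⟪(1 / ‖xk k‖) • xk k, z⟫
      = ⟪(1 / ‖xk k‖) • xk k, z - s⟫ + ⟪(1 / ‖xk k‖) • xk k, s⟫ := by
    rw [inner_sub_right]; ring
  rw [Real.dist_eq, sub_zero, key]
  calc |⟪(1 / ‖xk k‖) • xk k, z - s⟫ + ⟪(1 / ‖xk k‖) • xk k, s⟫|
      ≤ |⟪(1 / ‖xk k‖) • xk k, z - s⟫| + |⟪(1 / ‖xk k‖) • xk k, s⟫| := abs_add_le _ _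
    _ < ε / 2 + ε / 2 := by
        have := hKc k hk
        exact add_lt_add (h₁.trans_lt hN) (h₂.trans_lt this)
    _ = ε := by ring

lemma sqrt_nat_atTop : Tendsto (fun k : ℕ => Real.sqrt k) atTop atTop := by
  have : Tendsto (fun x : ℝ => x ^ (1/2 : ℝ)) atTop atTop := tendsto_rpow_atTop (by norm_num)
  have h := this.comp tendsto_natCast_atTop_atTop (α := ℕ)
  refine h.congr fun k => ?_
  simp [Real.sqrt_eq_rpow]

lemma norm_q_eq_one {k : ℕ} (hk : 1 ≤ k) : ‖(1 / ‖xk k‖) • xk k‖ = 1 := by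
  have hpos : 0 < Real.sqrt k := Real.sqrt_pos.2 (by exact_mod_cast hk)
  rw [norm_smul, norm_xk, Real.norm_eq_abs, abs_of_nonneg (by positivity),
    one_div, inv_mul_cancel₀ hpos.ne']

end

/-- On `ℓ²` (square-summable real sequences) there is a non-expansive map
`T` with no fixed point such that the fixed-point iteration started at `0` satisfies
`‖x^k‖ → ∞`, the normalized sequence converges weakly to `0`, but does not converge
strongly to anything. -/
theorem weak_not_strong_cosmic_convergence :
    ∃ T : lp (fun _ : ℕ => ℝ) 2 → lp (fun _ : ℕ => ℝ) 2,
      (∀ u v, ‖T u - T v‖ ≤ ‖u - v‖) ∧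
      (∀ u, T u ≠ u) ∧
      (Tendsto (fun k : ℕ => ‖T^[k] 0‖) atTop atTop) ∧
      (∀ z : lp (fun _ : ℕ => ℝ) 2,
        Tendsto (fun k : ℕ => ⟪(1 / ‖T^[k] 0‖) • T^[k] 0, z⟫) atTop (nhds 0)) ∧
      (¬ ∃ q : lp (fun _ : ℕ => ℝ) 2,
        Tendsto (fun k : ℕ => (1 / ‖T^[k] 0‖) • T^[k] 0) atTop (nhds q)) := by
  refine ⟨Tmap, fun u v => ?_, fun u hu => ?_, ?_, fun z => ?_, ?_⟩
  · rw [Tmap_sub]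
    exact (norm_shift (u - v)).le
  · -- no fixed point
    have hall : ∀ n, (u : ℕ → ℝ) n = 1 := by
      intro n
      induction n with
      | zero => rw [← hu]; exact Tmap_apply_zero u
      | succ n ih => rw [← hu, Tmap_apply_succ, ih]
    have hsum : Summable fun n : ℕ => ‖(u : ℕ → ℝ) n‖ ^ (2 : ℝ≥0∞).toReal :=
      (lp.memℓp u).summable (by norm_num)
    have : Summable fun _ : ℕ => (1 : ℝ) := by
      refine hsum.congr fun n => ?_
      rw [hall n]; norm_num
    have h0 := this.tendsto_atTop_zero
    exact one_ne_zero (tendsto_nhds_unique tendsto_const_nhds h0)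
  · simp only [iterate_Tmap, norm_xk]
    exact sqrt_nat_atTop
  · simp only [iterate_Tmap]
    exact weak_conv z
  · rintro ⟨q, hq⟩
    simp only [iterate_Tmap] at hq
    have hnorm : Tendsto (fun k : ℕ => ‖(1 / ‖xk k‖) • xk k‖) atTop (nhds ‖q‖) := hq.norm
    have hev : (fun k : ℕ => ‖(1 / ‖xk k‖) • xk k‖) =ᶠ[atTop] fun _ => (1 : ℝ) :=
      eventually_atTop.2 ⟨1, fun k hk => norm_q_eq_one hk⟩
    rw [tendsto_congr' hev] at hnorm
    have hq1 : ‖q‖ = 1 := (tendsto_nhds_unique tendsto_const_nhds hnorm).symm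
    have hinner : Tendsto (fun k : ℕ => ⟪(1 / ‖xk k‖) • xk k, q⟫) atTop (nhds ⟪q, q⟫) :=
      hq.inner tendsto_const_nhds
    have h0 : ⟪q, q⟫ = (0 : ℝ) := tendsto_nhds_unique hinner (weak_conv q)
    rw [real_inner_self_eq_norm_sq, hq1] at h0
    norm_num at h0
end

section
/- Let H be a real Hilbert space, T : H → H non-expansive, and let (x^k) be the fixed-point iteration x^{k+1} = T(x^k). Suppose q ∈ H is a weak cosmic accumulation point of (x^k) along a subsequence (x^{k_j}) satisfying ‖x^{k_j}‖ → ∞, ‖T(x^{k_j}) − x^{k_j}‖ → 0, and (1/‖x^{k_j}‖)x^{k_j} ⇀ q weakly. Then for every x ∈ H, ⟨T(x) − x, q⟩ ≥ 0. In particular, if q ≠ 0, the hyperplane {y : ⟨q, y⟩ = 0} separates the closure of ran(I − T) = {x − T(x) : x ∈ H} from any point w with ⟨q, w⟩ > 0, i.e., ⟨q, z⟩ ≤ 0 for all z ∈ ran(I − T). -/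
open Filter
open scoped RealInnerProductSpace

/-- If `q` is a weak cosmic accumulation point of the fixed-point
iteration of a non-expansive `T` along a subsequence with `‖x^{k_j}‖ → ∞` and
`‖T(x^{k_j}) − x^{k_j}‖ → 0`, then `⟪T(x) − x, q⟫ ≥ 0` for all `x`; in particular, for
`q ≠ 0` the hyperplane `{y : ⟪q, y⟫ = 0}` separates `ran(I − T)` from `{0}`, i.e.
`⟪q, z⟫ ≤ 0` for all `z ∈ ran(I − T)`. -/
theorem cosmic_accPt_separating_hyperplane
    {H : Type*} [NormedAddCommGroup H] [InnerProductSpace ℝ H] [CompleteSpace H]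
    (T : H → H) (hT : ∀ u v : H, ‖T u - T v‖ ≤ ‖u - v‖)
    (x : ℕ → H) (hiter : ∀ k, x (k + 1) = T (x k))
    (q : H) (φ : ℕ → ℕ) (hφ : StrictMono φ)
    (hnorm : Tendsto (fun j => ‖x (φ j)‖) atTop atTop)
    (hres : Tendsto (fun j => ‖T (x (φ j)) - x (φ j)‖) atTop (nhds 0))
    (hweak : ∀ z : H,
      Tendsto (fun j => ⟪(1 / ‖x (φ j)‖) • x (φ j), z⟫) atTop (nhds ⟪q, z⟫)) :
    (∀ w : H, 0 ≤ ⟪T w - w, q⟫) ∧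
      (q ≠ 0 → ∀ z ∈ Set.range (fun w : H => w - T w), ⟪q, z⟫ ≤ 0) := by
  have key : ∀ w : H, ⟪q, w - T w⟫ ≤ 0 := by
    intro w
    -- the bounding sequence
    have hinv : Tendsto (fun j => ‖x (φ j)‖⁻¹) atTop (nhds 0) :=
      hnorm.inv_tendsto_atTop
    have hb : Tendsto (fun j => ‖w‖ ^ 2 / (2 * ‖x (φ j)‖) + ‖T (x (φ j)) - x (φ j)‖)
        atTop (nhds 0) := by
      have h1 : Tendsto (fun j => ‖w‖ ^ 2 / (2 * ‖x (φ j)‖)) atTop (nhds 0) := by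
        have := (hinv.const_mul (‖w‖ ^ 2 / 2))
        simpa [div_eq_mul_inv, mul_comm, mul_assoc, mul_left_comm] using this
      simpa using h1.add hres
    have hpos : ∀ᶠ j in atTop, 0 < ‖x (φ j)‖ :=
      hnorm.eventually_gt_atTop 0
    have hle : ∀ᶠ j in atTop,
        ⟪(1 / ‖x (φ j)‖) • x (φ j), w - T w⟫
          ≤ ‖w‖ ^ 2 / (2 * ‖x (φ j)‖) + ‖T (x (φ j)) - x (φ j)‖ := by
      filter_upwards [hpos] with j hn
      set a := x (φ j) with ha
      set n := ‖a‖ with hnd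
      set r := T a - a with hr
      have hTa : T a = a + r := by simp [hr]
      have h1 : ‖T a - T w‖ ≤ ‖a - w‖ := hT a w
      have h2 : ‖T a - T w‖ ^ 2 ≤ ‖a - w‖ ^ 2 := by
        have := mul_self_le_mul_self (norm_nonneg _) h1
        nlinarith
      have e1 : ‖a + (r - T w)‖ ^ 2 = ‖a‖ ^ 2 + 2 * ⟪a, r - T w⟫ + ‖r - T w‖ ^ 2 :=
        norm_add_sq_real a (r - T w)
      have e2 : ‖a - w‖ ^ 2 = ‖a‖ ^ 2 - 2 * ⟪a, w⟫ + ‖w‖ ^ 2 :=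
        norm_sub_sq_real a w
      have e3 : T a - T w = a + (r - T w) := by rw [hTa]; abel
      rw [e3, e1, e2] at h2
      have e4 : ⟪a, r - T w⟫ = ⟪a, r⟫ - ⟪a, T w⟫ := inner_sub_right a r (T w)
      have e5 : ⟪a, w - T w⟫ = ⟪a, w⟫ - ⟪a, T w⟫ := inner_sub_right a w (T w)
      have e6 : |⟪a, r⟫| ≤ ‖a‖ * ‖r‖ := abs_real_inner_le_norm a r
      have e7 : -(n * ‖r‖) ≤ ⟪a, r⟫ := by
        have := abs_le.mp e6
        simpa [hnd] using this.1
      have hsq : 0 ≤ ‖r - T w‖ ^ 2 := sq_nonneg _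
      -- so ⟪a, w - T w⟫ ≤ ‖w‖^2/2 + n * ‖r‖
      have hmain : ⟪a, w - T w⟫ ≤ ‖w‖ ^ 2 / 2 + n * ‖r‖ := by
        rw [e5]; nlinarith [h2, e4]
      have hinner : ⟪(1 / n) • a, w - T w⟫ = (1 / n) * ⟪a, w - T w⟫ :=
        real_inner_smul_left a (w - T w) (1 / n)
      rw [hinner]
      have hn' : (0:ℝ) < n := hn
      have step : 1 / n * ⟪a, w - T w⟫ ≤ 1 / n * (‖w‖ ^ 2 / 2 + n * ‖r‖) :=
        mul_le_mul_of_nonneg_left hmain (by positivity)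
      have eqn : 1 / n * (‖w‖ ^ 2 / 2 + n * ‖r‖) = ‖w‖ ^ 2 / (2 * n) + ‖r‖ := by
        field_simp
      linarith [eqn ▸ step]
    have hlim := hweak (w - T w)
    exact le_of_tendsto_of_tendsto hlim hb hle
  constructor
  · intro w
    have h := key w
    rw [show w - T w = -(T w - w) by abel, inner_neg_right] at h
    rw [real_inner_comm]
    linarith
  · intro _ z hz
    obtain ⟨w, rfl⟩ := hz
    exact key w
end

section
/- Let H be a real Hilbert space, T : H → H non-expansive, and let (x^k) be the fixed-point iteration x^{k+1} = T(x^k). Suppose q ∈ H with q ≠ 0, and suppose there is a strictly increasing sequence of indices (k_j) with ‖x^{k_j}‖ → ∞, ‖T(x^{k_j}) − x^{k_j}‖ → 0, and (1/‖x^{k_j}‖)x^{k_j} ⇀ q weakly. Then the scalar sequence (⟨x^k, q⟩) is nondecreasing in k and ⟨x^k, q⟩ → ∞ as k → ∞. -/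
open Filter
open scoped RealInnerProductSpace

/-- If `q ≠ 0` is a weak cosmic accumulation point of the fixed-point
iteration of a non-expansive `T` along a subsequence with `‖x^{k_j}‖ → ∞` and
`‖T(x^{k_j}) − x^{k_j}‖ → 0`, then `⟪x^k, q⟫` is nondecreasing in `k` and tends to `∞`. -/
theorem inner_with_cosmic_accPt_tendsto_atTop
    {H : Type*} [NormedAddCommGroup H] [InnerProductSpace ℝ H] [CompleteSpace H]
    (T : H → H) (hT : ∀ u v : H, ‖T u - T v‖ ≤ ‖u - v‖)
    (x : ℕ → H) (hiter : ∀ k, x (k + 1) = T (x k))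
    (q : H) (hq : q ≠ 0) (φ : ℕ → ℕ) (hφ : StrictMono φ)
    (hnorm : Tendsto (fun j => ‖x (φ j)‖) atTop atTop)
    (hres : Tendsto (fun j => ‖T (x (φ j)) - x (φ j)‖) atTop (nhds 0))
    (hweak : ∀ z : H,
      Tendsto (fun j => ⟪(1 / ‖x (φ j)‖) • x (φ j), z⟫) atTop (nhds ⟪q, z⟫)) :
    Monotone (fun k => ⟪x k, q⟫) ∧
      Tendsto (fun k => ⟪x k, q⟫) atTop atTop := by
  set N : ℕ → ℝ := fun j => ‖x (φ j)‖ with hN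
  set ε : ℕ → ℝ := fun j => ‖T (x (φ j)) - x (φ j)‖ with hε
  have hNev : ∀ᶠ j in atTop, 1 ≤ N j := hnorm.eventually_ge_atTop 1
  have hmono : Monotone (fun k => ⟪x k, q⟫) := by
    apply monotone_nat_of_le_succ
    intro k
    have key : (0:ℝ) ≤ ⟪q, x (k+1) - x k⟫ := by
      set C : ℝ := ‖x (k+1)‖^2 - ‖x k‖^2 with hC
      set g : ℕ → ℝ := fun j => (C - 2*ε j*‖x k‖ - (ε j)^2)/(2*N j) - ε j with hg
      -- g tends to 0
      have hg0 : Tendsto g atTop (nhds 0) := by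
        have h1 : Tendsto (fun j => (C - 2*ε j*‖x k‖ - (ε j)^2)) atTop
            (nhds (C - 2*0*‖x k‖ - 0^2)) := by
          exact (tendsto_const_nhds.sub (((tendsto_const_nhds.mul hres)).mul
            tendsto_const_nhds)).sub (hres.pow 2)
        have h2 : Tendsto (fun j => 2*N j) atTop atTop :=
          hnorm.const_mul_atTop (by norm_num)
        have h3 := Tendsto.div_atTop h1 h2
        have := h3.sub hres
        simpa using this
      -- a_j ≥ g j eventually
      have hle : ∀ᶠ j in atTop, g j ≤ ⟪(1 / N j) • x (φ j), x (k+1) - x k⟫ := by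
        filter_upwards [hNev] with j hj
        have hNpos : (0:ℝ) < N j := lt_of_lt_of_le one_pos hj
        have hεnn : 0 ≤ ε j := norm_nonneg _
        have hA : ‖x (φ j) - x (k+1)‖ ≤ ‖x (φ j) - x k‖ + ε j := by
          have h1 : ‖x (φ j + 1) - x (k+1)‖ ≤ ‖x (φ j) - x k‖ := by
            rw [hiter, hiter]; exact hT _ _
          calc ‖x (φ j) - x (k+1)‖
              ≤ ‖x (φ j) - x (φ j + 1)‖ + ‖x (φ j + 1) - x (k+1)‖ :=
                norm_sub_le_norm_sub_add_norm_sub _ _ _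
            _ ≤ ε j + ‖x (φ j) - x k‖ := by
                refine add_le_add ?_ h1
                rw [hiter, norm_sub_rev]
            _ = ‖x (φ j) - x k‖ + ε j := by ring
        have hA2 : ‖x (φ j) - x (k+1)‖^2 ≤ (‖x (φ j) - x k‖ + ε j)^2 :=
          pow_le_pow_left₀ (norm_nonneg _) hA 2
        have e1 : ‖x (φ j) - x (k+1)‖^2
            = ‖x (φ j)‖^2 - 2*⟪x (φ j), x (k+1)⟫ + ‖x (k+1)‖^2 := by
          rw [@norm_sub_sq_real]
        have e2 : ‖x (φ j) - x k‖^2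
            = ‖x (φ j)‖^2 - 2*⟪x (φ j), x k⟫ + ‖x k‖^2 := by
          rw [@norm_sub_sq_real]
        have hB : ‖x (φ j) - x k‖ ≤ N j + ‖x k‖ := norm_sub_le _ _
        have hBnn : (0:ℝ) ≤ ‖x (φ j) - x k‖ := norm_nonneg _
        have key2 : C - 2*ε j*‖x k‖ - (ε j)^2 - 2*ε j*N j
            ≤ 2*⟪x (φ j), x (k+1) - x k⟫ := by
          rw [inner_sub_right]
          nlinarith [hA2, e1, e2, hB, hBnn, hεnn, hNpos]
        rw [real_inner_smul_left]
        show (C - 2*ε j*‖x k‖ - ε j^2)/(2*N j) - ε j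
            ≤ 1/N j * ⟪x (φ j), x (k+1) - x k⟫
        have h4 : (C - 2*ε j*‖x k‖ - ε j^2 - 2*ε j*N j)/(2*N j)
            ≤ (2*⟪x (φ j), x (k+1) - x k⟫)/(2*N j) := by
          gcongr
        have eqL : (C - 2*ε j*‖x k‖ - ε j^2 - 2*ε j*N j)/(2*N j)
            = (C - 2*ε j*‖x k‖ - ε j^2)/(2*N j) - ε j := by
          field_simp
        have eqR : (2*⟪x (φ j), x (k+1) - x k⟫)/(2*N j)
            = 1/N j * ⟪x (φ j), x (k+1) - x k⟫ := by
          field_simp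
        rw [← eqL, ← eqR]
        exact h4
      have hlim := hweak (x (k+1) - x k)
      exact le_of_tendsto_of_tendsto hg0 hlim hle
    have : ⟪q, x (k+1) - x k⟫ = ⟪x (k+1), q⟫ - ⟪x k, q⟫ := by
      rw [real_inner_comm, inner_sub_left]
    linarith [key, this ▸ key]
  refine ⟨hmono, ?_⟩
  have hsub : Tendsto ((fun k => ⟪x k, q⟫) ∘ φ) atTop atTop := by
    have hqq : (0:ℝ) < ⟪q, q⟫ := by
      rw [real_inner_self_eq_norm_sq]
      exact pow_pos (norm_pos_iff.mpr hq) 2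
    have h1 : Tendsto (fun j => N j * ⟪(1 / N j) • x (φ j), q⟫) atTop atTop :=
      hnorm.atTop_mul_pos hqq (hweak q)
    refine h1.congr' ?_
    filter_upwards [hNev] with j hj
    have hNpos : (0:ℝ) < N j := lt_of_lt_of_le one_pos hj
    rw [real_inner_smul_left]
    field_simp
    rfl
  exact tendsto_atTop_of_monotone_of_subseq hmono hsub
end

section
/- Let H be a real Hilbert space, T : H → H non-expansive, and let (x^k) be the fixed-point iteration x^{k+1} = T(x^k). Suppose q₁, q₂ ∈ H are weak cosmic accumulation points of (x^k): for each i ∈ {1,2} there is a strictly increasing sequence of indices (k_j^{(i)}) with ‖x^{k_j^{(i)}}‖ → ∞, ‖T(x^{k_j^{(i)}}) − x^{k_j^{(i)}}‖ → 0, and (1/‖x^{k_j^{(i)}}‖)x^{k_j^{(i)}} ⇀ q_i weakly. Then ⟨q₁, q₂⟩ ≥ 0. -/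
open Filter
open scoped RealInnerProductSpace

/-- two weak cosmic accumulation points `q₁, q₂` of the fixed-point
iteration of a non-expansive `T` satisfy `⟪q₁, q₂⟫ ≥ 0`. -/
theorem cosmic_accPts_inner_nonneg
    {H : Type*} [NormedAddCommGroup H] [InnerProductSpace ℝ H] [CompleteSpace H]
    (T : H → H) (hT : ∀ u v : H, ‖T u - T v‖ ≤ ‖u - v‖)
    (x : ℕ → H) (hiter : ∀ k, x (k + 1) = T (x k))
    (q₁ q₂ : H) (φ₁ φ₂ : ℕ → ℕ) (hφ₁ : StrictMono φ₁) (hφ₂ : StrictMono φ₂)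
    (hnorm₁ : Tendsto (fun j => ‖x (φ₁ j)‖) atTop atTop)
    (hres₁ : Tendsto (fun j => ‖T (x (φ₁ j)) - x (φ₁ j)‖) atTop (nhds 0))
    (hweak₁ : ∀ z : H,
      Tendsto (fun j => ⟪(1 / ‖x (φ₁ j)‖) • x (φ₁ j), z⟫) atTop (nhds ⟪q₁, z⟫))
    (hnorm₂ : Tendsto (fun j => ‖x (φ₂ j)‖) atTop atTop)
    (hres₂ : Tendsto (fun j => ‖T (x (φ₂ j)) - x (φ₂ j)‖) atTop (nhds 0))
    (hweak₂ : ∀ z : H,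
      Tendsto (fun j => ⟪(1 / ‖x (φ₂ j)‖) • x (φ₂ j), z⟫) atTop (nhds ⟪q₂, z⟫)) :
    0 ≤ ⟪q₁, q₂⟫ := by
  -- the residual sequence
  set r : ℕ → ℝ := fun n => ‖x (n + 1) - x n‖ with hr_def
  have hr_succ : ∀ n, r (n + 1) ≤ r n := by
    intro n
    have h := hT (x (n + 1)) (x n)
    simp only [hr_def]
    calc ‖x (n + 1 + 1) - x (n + 1)‖ = ‖T (x (n + 1)) - T (x n)‖ := by
          rw [hiter (n + 1), hiter n]
      _ ≤ ‖x (n + 1) - x n‖ := h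
  have hr_anti : Antitone r := antitone_nat_of_succ_le hr_succ
  have hr_nonneg : ∀ n, 0 ≤ r n := fun n => norm_nonneg _
  have hres₂' : Tendsto (fun j => r (φ₂ j)) atTop (nhds 0) := by
    have : (fun j => r (φ₂ j)) = fun j => ‖T (x (φ₂ j)) - x (φ₂ j)‖ := by
      funext j; simp only [hr_def]; rw [hiter (φ₂ j)]
    rw [this]; exact hres₂
  -- the full residual sequence tends to zero
  have hr0 : Tendsto r atTop (nhds 0) := by
    rw [Metric.tendsto_atTop] at hres₂' ⊢
    intro ε hε
    obtain ⟨N, hN⟩ := hres₂' ε hε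
    refine ⟨φ₂ N, fun n hn => ?_⟩
    have h1 : r n ≤ r (φ₂ N) := hr_anti hn
    have h2 := hN N le_rfl
    rw [Real.dist_eq, sub_zero, abs_of_nonneg (hr_nonneg _)] at h2 ⊢
    linarith
  -- simultaneous shift inequality
  have key2 : ∀ k m : ℕ, ‖x (m + k) - x k‖ ≤ ‖x m - x 0‖ := by
    intro k
    induction k with
    | zero => intro m; simp
    | succ k ih =>
      intro m
      have : ‖x (m + (k + 1)) - x (k + 1)‖ = ‖T (x (m + k)) - T (x k)‖ := by
        rw [show m + (k + 1) = (m + k) + 1 by ring, hiter (m + k), hiter k]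
      rw [this]
      exact le_trans (hT _ _) (ih m)
  -- displacement bound
  have key3 : ∀ n k : ℕ, ‖x (n + k) - x n‖ ≤ (k : ℝ) * r n := by
    intro n k
    induction k with
    | zero => simp
    | succ k ih =>
      calc ‖x (n + (k + 1)) - x n‖
          ≤ ‖x (n + k + 1) - x (n + k)‖ + ‖x (n + k) - x n‖ := by
            rw [show n + (k + 1) = n + k + 1 by ring]
            exact norm_sub_le_norm_sub_add_norm_sub _ _ _
        _ ≤ r n + (k : ℝ) * r n := add_le_add (hr_anti (Nat.le_add_right n k)) ih
        _ = ((k + 1 : ℕ) : ℝ) * r n := by push_cast; ring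
  -- core estimate: ⟪q₂, x k⟫ ≥ -‖x 0‖ for all k
  have hq2 : ∀ k : ℕ, -‖x 0‖ ≤ ⟪q₂, x k⟫ := by
    intro k
    have hsub : Tendsto (fun l => φ₂ l - k) atTop atTop := by
      apply tendsto_atTop_atTop.2
      intro b
      refine ⟨b + k, fun a ha => ?_⟩
      have : a ≤ φ₂ a := hφ₂.le_apply
      omega
    have hDr : Tendsto (fun l => r (φ₂ l - k)) atTop (nhds 0) := hr0.comp hsub
    set D : ℕ → ℝ := fun l => ‖x 0‖ + (k : ℝ) * r (φ₂ l - k) with hD_def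
    have hD_lim : Tendsto D atTop (nhds (‖x 0‖)) := by
      have h1 : Tendsto (fun l => (k : ℝ) * r (φ₂ l - k)) atTop (nhds ((k : ℝ) * 0)) :=
        hDr.const_mul _
      have h2 : Tendsto (fun l => ‖x 0‖ + (k : ℝ) * r (φ₂ l - k)) atTop
          (nhds (‖x 0‖ + (k : ℝ) * 0)) := tendsto_const_nhds.add h1
      simpa using h2
    have hD_nonneg : ∀ l, 0 ≤ D l := by
      intro l
      have := hr_nonneg (φ₂ l - k)
      have : (0:ℝ) ≤ (k : ℝ) * r (φ₂ l - k) := by positivity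
      simp only [hD_def]
      have := norm_nonneg (x 0)
      linarith
    have hinv : Tendsto (fun l => (2 * ‖x (φ₂ l)‖)⁻¹) atTop (nhds 0) := by
      apply Tendsto.inv_tendsto_atTop
      exact Tendsto.const_mul_atTop two_pos hnorm₂
    have hft : Tendsto (fun l => -(D l) - (D l) ^ 2 * (2 * ‖x (φ₂ l)‖)⁻¹) atTop
        (nhds (-‖x 0‖)) := by
      have h1 : Tendsto (fun l => (D l) ^ 2 * (2 * ‖x (φ₂ l)‖)⁻¹) atTop (nhds 0) := by
        have := ((hD_lim.pow 2).mul hinv)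
        simpa using this
      have := (hD_lim.neg.sub h1)
      simpa using this
    have hgt := hweak₂ (x k)
    have hev : ∀ᶠ l in atTop,
        -(D l) - (D l) ^ 2 * (2 * ‖x (φ₂ l)‖)⁻¹ ≤ ⟪(1 / ‖x (φ₂ l)‖) • x (φ₂ l), x k⟫ := by
      filter_upwards [hnorm₂.eventually_ge_atTop 1, eventually_ge_atTop k] with l hA1 hlk
      have hmk : (φ₂ l - k) + k = φ₂ l := Nat.sub_add_cancel (le_trans hlk hφ₂.le_apply)
      set m := φ₂ l with hm
      set n := m - k with hn
      set A := ‖x m‖ with hA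
      have hApos : (0:ℝ) < A := lt_of_lt_of_le one_pos hA1
      -- bound on ‖x m - x k‖
      have hC : ‖x m - x k‖ ≤ A + D l := by
        have h1 : ‖x m - x k‖ ≤ ‖x n - x 0‖ := by
          have := key2 k n
          rwa [hmk] at this
        have h2 : ‖x n - x 0‖ ≤ ‖x n‖ + ‖x 0‖ := norm_sub_le _ _
        have h3 : ‖x n‖ ≤ A + ‖x (n + k) - x n‖ := by
          calc ‖x n‖ = ‖x (n + k) - (x (n + k) - x n)‖ := by rw [sub_sub_cancel]
            _ ≤ ‖x (n + k)‖ + ‖x (n + k) - x n‖ := norm_sub_le _ _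
            _ = A + ‖x (n + k) - x n‖ := by rw [hmk]
        have h4 : ‖x (n + k) - x n‖ ≤ (k : ℝ) * r n := key3 n k
        simp only [hD_def]
        have : ‖x n‖ ≤ A + (k : ℝ) * r (φ₂ l - k) := by
          rw [← hn]; linarith
        linarith
      have hCnn : (0:ℝ) ≤ ‖x m - x k‖ := norm_nonneg _
      have hDnn := hD_nonneg l
      -- expand the inner product
      have hinner : ⟪x m, x k⟫ =
          (A ^ 2 + ‖x k‖ ^ 2 - ‖x m - x k‖ ^ 2) / 2 := by
        have := norm_sub_sq_real (x m) (x k)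
        linarith
      have hlow : -(A * D l + (D l) ^ 2 / 2) ≤ ⟪x m, x k⟫ := by
        have hC2 : ‖x m - x k‖ ^ 2 ≤ (A + D l) ^ 2 := by nlinarith
        have hB2 : (0:ℝ) ≤ ‖x k‖ ^ 2 := sq_nonneg _
        have hring : (A ^ 2 + ‖x k‖ ^ 2 - (A + D l) ^ 2) / 2 =
            -(A * D l + (D l) ^ 2 / 2) + ‖x k‖ ^ 2 / 2 := by ring
        rw [hinner]
        clear_value A D r
        linarith
      rw [real_inner_smul_left, one_div]
      have hstep : A⁻¹ * (-(A * D l + (D l) ^ 2 / 2)) ≤ A⁻¹ * ⟪x m, x k⟫ :=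
        mul_le_mul_of_nonneg_left hlow (inv_nonneg.2 hApos.le)
      have heq : A⁻¹ * (-(A * D l + (D l) ^ 2 / 2)) =
          -(D l) - (D l) ^ 2 * (2 * A)⁻¹ := by
        field_simp
        ring
      linarith [heq ▸ hstep]
    exact le_of_tendsto_of_tendsto hft hgt hev
  -- conclude
  have hlow0 : Tendsto (fun j => -‖x 0‖ * ‖x (φ₁ j)‖⁻¹) atTop (nhds 0) := by
    have h1 : Tendsto (fun j => ‖x (φ₁ j)‖⁻¹) atTop (nhds 0) :=
      Tendsto.inv_tendsto_atTop hnorm₁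
    have := h1.const_mul (-‖x 0‖)
    simpa using this
  have hev : ∀ᶠ j in atTop,
      -‖x 0‖ * ‖x (φ₁ j)‖⁻¹ ≤ ⟪(1 / ‖x (φ₁ j)‖) • x (φ₁ j), q₂⟫ := by
    filter_upwards [hnorm₁.eventually_ge_atTop 1] with j hj
    have hApos : (0:ℝ) < ‖x (φ₁ j)‖ := lt_of_lt_of_le one_pos hj
    rw [real_inner_smul_left, one_div, real_inner_comm]
    have := hq2 (φ₁ j)
    have h := mul_le_mul_of_nonneg_left this (inv_nonneg.2 hApos.le)
    calc -‖x 0‖ * ‖x (φ₁ j)‖⁻¹ = ‖x (φ₁ j)‖⁻¹ * -‖x 0‖ := by ring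
      _ ≤ ‖x (φ₁ j)‖⁻¹ * ⟪q₂, x (φ₁ j)⟫ := h
  exact le_of_tendsto_of_tendsto hlow0 (hweak₁ q₂) hev
end

section
/- Let H be a real Hilbert space, T : H → H non-expansive, and let (x^k) be the fixed-point iteration x^{k+1} = T(x^k). Suppose q ∈ H is a weak cosmic accumulation point of (x^k) along a subsequence (x^{k_j}) satisfying ‖x^{k_j}‖ → ∞, ‖T(x^{k_j}) − x^{k_j}‖ → 0, and (1/‖x^{k_j}‖)x^{k_j} ⇀ q weakly. Then q belongs to the dual cone of the closure of the convex cone generated by ran(T − I) = {T(x) − x : x ∈ H}; that is, ⟨q, w⟩ ≥ 0 for every w in the closure of the set of nonnegative combinations of elements of ran(T − I). -/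
open Filter
open scoped RealInnerProductSpace

/-- a weak cosmic accumulation point `q` of the fixed-point iteration of a
non-expansive `T` lies in the dual cone of the closure of the convex cone generated by
`ran(T − I)`: `⟪q, w⟫ ≥ 0` for every `w` in the closure of the set of nonnegative
combinations of elements of `ran(T − I)`. -/
theorem cosmic_accPt_mem_dualCone
    {H : Type*} [NormedAddCommGroup H] [InnerProductSpace ℝ H] [CompleteSpace H]
    (T : H → H) (hT : ∀ u v : H, ‖T u - T v‖ ≤ ‖u - v‖)
    (x : ℕ → H) (hiter : ∀ k, x (k + 1) = T (x k))
    (q : H) (φ : ℕ → ℕ) (hφ : StrictMono φ)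
    (hnorm : Tendsto (fun j => ‖x (φ j)‖) atTop atTop)
    (hres : Tendsto (fun j => ‖T (x (φ j)) - x (φ j)‖) atTop (nhds 0))
    (hweak : ∀ z : H,
      Tendsto (fun j => ⟪(1 / ‖x (φ j)‖) • x (φ j), z⟫) atTop (nhds ⟪q, z⟫)) :
    ∀ w ∈ closure {w : H | ∃ (n : ℕ) (c : Fin n → ℝ) (a : Fin n → H),
        (∀ i, 0 ≤ c i) ∧ (∀ i, a i ∈ Set.range (fun u : H => T u - u)) ∧
        w = ∑ i, c i • a i},
      0 ≤ ⟪q, w⟫ := by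
  -- Key step: for every u, ⟪q, T u - u⟫ ≥ 0.
  have key : ∀ u : H, 0 ≤ ⟪q, T u - u⟫ := by
    intro u
    set N : ℕ → ℝ := fun j => ‖x (φ j)‖ with hN
    -- f j = ⟪(1/N j) • x(φ j), (u - T u) + (T(x φ j) - x φ j)⟫
    have hev : ∀ᶠ j in atTop, (1 : ℝ) ≤ N j := hnorm.eventually_ge_atTop 1
    have h1 : Tendsto (fun j => ⟪(1 / N j) • x (φ j), u - T u⟫) atTop
        (nhds ⟪q, u - T u⟫) := hweak (u - T u)
    have h2 : Tendsto (fun j => ⟪(1 / N j) • x (φ j), T (x (φ j)) - x (φ j)⟫) atTop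
        (nhds 0) := by
      refine squeeze_zero_norm' ?_ hres
      filter_upwards [hev] with j hj
      calc ‖⟪(1 / N j) • x (φ j), T (x (φ j)) - x (φ j)⟫‖
          ≤ ‖(1 / N j) • x (φ j)‖ * ‖T (x (φ j)) - x (φ j)‖ := norm_inner_le_norm _ _
        _ ≤ 1 * ‖T (x (φ j)) - x (φ j)‖ := by
            apply mul_le_mul_of_nonneg_right _ (norm_nonneg _)
            rw [norm_smul]
            have hNpos : 0 < N j := lt_of_lt_of_le one_pos hj
            rw [Real.norm_eq_abs, abs_of_pos (by positivity)]
            rw [div_mul_eq_mul_div, one_mul, div_le_one hNpos]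
        _ = ‖T (x (φ j)) - x (φ j)‖ := one_mul _
    have h3 : Tendsto (fun j => ‖u‖ ^ 2 / (2 * N j)) atTop (nhds 0) := by
      apply Tendsto.div_atTop (tendsto_const_nhds)
      exact Tendsto.const_mul_atTop two_pos hnorm
    have hle : ∀ᶠ j in atTop,
        ⟪(1 / N j) • x (φ j), u - T u⟫ + ⟪(1 / N j) • x (φ j), T (x (φ j)) - x (φ j)⟫
          ≤ ‖u‖ ^ 2 / (2 * N j) := by
      filter_upwards [hev] with j hj
      have hNpos : 0 < N j := lt_of_lt_of_le one_pos hj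
      set y := x (φ j) with hy
      set r := T y - y with hr
      -- nonexpansiveness
      have hTle : ‖T y - T u‖ ≤ ‖y - u‖ := hT y u
      have hsq : ‖T y - T u‖ ^ 2 ≤ ‖y - u‖ ^ 2 := by
        have := norm_nonneg (T y - T u)
        nlinarith
      have hrw : T y - T u = y + (r - T u) := by rw [hr]; abel
      rw [hrw] at hsq
      have e1 : ‖y + (r - T u)‖ ^ 2 = ‖y‖ ^ 2 + 2 * ⟪y, r - T u⟫ + ‖r - T u‖ ^ 2 := by
        rw [← real_inner_self_eq_norm_sq, ← real_inner_self_eq_norm_sq,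
          ← real_inner_self_eq_norm_sq, inner_add_add_self, real_inner_comm (r - T u) y]; ring
      have e2 : ‖y - u‖ ^ 2 = ‖y‖ ^ 2 - 2 * ⟪y, u⟫ + ‖u‖ ^ 2 := by
        rw [← real_inner_self_eq_norm_sq, ← real_inner_self_eq_norm_sq,
          ← real_inner_self_eq_norm_sq, inner_sub_sub_self, real_inner_comm u y]; ring
      rw [e1, e2] at hsq
      have e3 : ⟪y, r - T u⟫ = ⟪y, r⟫ - ⟪y, T u⟫ := inner_sub_right _ _ _
      have hA : ⟪y, u - T u⟫ + ⟪y, r⟫ ≤ ‖u‖ ^ 2 / 2 := by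
        have e4 : ⟪y, u - T u⟫ = ⟪y, u⟫ - ⟪y, T u⟫ := inner_sub_right _ _ _
        have hsqnn : (0:ℝ) ≤ ‖r - T u‖ ^ 2 := sq_nonneg _
        rw [e4]
        rw [e3] at hsq
        linarith
      rw [real_inner_smul_left, real_inner_smul_left, ← mul_add]
      rw [div_mul_eq_mul_div, one_mul, div_le_div_iff₀ hNpos (by positivity)]
      calc (⟪y, u - T u⟫ + ⟪y, r⟫) * (2 * N j)
          ≤ (‖u‖ ^ 2 / 2) * (2 * N j) := by
            apply mul_le_mul_of_nonneg_right hA (by positivity)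
        _ = ‖u‖ ^ 2 * N j := by ring
    have hlim : ⟪q, u - T u⟫ + 0 ≤ (0:ℝ) :=
      le_of_tendsto_of_tendsto (h1.add h2) h3 hle
    have : ⟪q, T u - u⟫ = -⟪q, u - T u⟫ := by
      rw [inner_sub_right, inner_sub_right]; ring
    rw [this]; linarith
  -- Pass to conic combinations and closure.
  intro w hw
  have hclosed : IsClosed {w : H | 0 ≤ ⟪q, w⟫} :=
    isClosed_le continuous_const (innerSL ℝ q).continuous
  refine closure_minimal ?_ hclosed hw
  rintro w ⟨n, c, a, hc, ha, rfl⟩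
  simp only [Set.mem_setOf_eq, inner_sum]
  apply Finset.sum_nonneg
  intro i _
  rw [real_inner_smul_right]
  obtain ⟨u, hu⟩ := ha i
  exact mul_nonneg (hc i) (hu ▸ key u)
end
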